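/- Let z', z'' : ZMod (2t) → ℤ be two distance signals (consecutive steps ±1, antipodal relation z(k+t) = t - z(k)), with e = z'' - z' and m = z'' + z'. Then the total number of local minima of z' plus that of z'' equals 2t - (1/(4t))·∑_{k odd, 1 ≤ k ≤ t-1} (|ê(k)|² + |m̂(k)|²)·sin²(πk/t). -/

import Mathlib

/-!
Let `g(x) = z(x+1) - z(x-1)` be the central difference of a distance signal `z`. Because the
steps are `±1`, the identity `8·[x is a local minimum] = 4 + 2(a - b) - g(x)²` holds with
`a = z(x+1) - z(x)`, `b = z(x) - z(x-1)`; the middle term telescopes, so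
`8·#minima = 8t - ∑ g²`. On the Fourier side `ĝ(k) = (ωᵏ - ω⁻ᵏ) ẑ(k)` with `ω = exp(πi/t)`,
so `|ĝ(k)|² = 4 sin²(πk/t) |ẑ(k)|²`. Antipodality makes `g` antiperiodic with period `t`, which
kills the even frequencies, and since `g` is real the frequencies `k` and `2t - k` contribute
equally. Parseval then turns `∑ g²` into a sum over the odd `k < t`, which is the formula for one
cycle; adding the two cycles and using the parallelogram law
`|ê|² + |m̂|² = 2 (|ẑ'|² + |ẑ''|²)` gives the theorem.
-/

/-- Number of local minima of a `2t`-periodic integer sequence. -/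
def minimaCount (t : ℕ) (z : ZMod (2*t) → ℤ) : ℕ :=
  ((Finset.range (2*t)).filter (fun k : ℕ =>
    z ((k : ZMod (2*t)) - 1) > z (k : ZMod (2*t)) ∧
    z ((k : ZMod (2*t)) + 1) > z (k : ZMod (2*t)))).card

/-- Discrete Fourier transform of a `2t`-periodic sequence,
using the primitive `2t`-th root of unity `exp(-πi/t)`. -/
noncomputable def dft (t : ℕ) (z : ZMod (2*t) → ℂ) (k : ℕ) : ℂ :=
  ∑ j ∈ Finset.range (2*t),
    z (j : ZMod (2*t)) * Complex.exp (-(Real.pi : ℂ) * Complex.I * k * j / t)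

open Finset
open scoped ZMod ComplexConjugate Real

theorem Finset.sum_range_natCast_zmod {M : Type*} [AddCommMonoid M] (n : ℕ) [NeZero n]
    (f : ZMod n → M) : ∑ j ∈ range n, f j = ∑ x : ZMod n, f x :=
  sum_nbij' (↑) ZMod.val (fun _ _ ↦ mem_univ _) (fun x _ ↦ mem_range.2 x.val_lt)
    (fun _ hj ↦ ZMod.val_cast_of_lt (mem_range.1 hj)) (fun x _ ↦ ZMod.natCast_zmod_val x)
    (fun _ _ ↦ rfl)

namespace ZMod

variable {N : ℕ} [NeZero N]

theorem dft_comp_add_right {E : Type*} [AddCommGroup E] [Module ℂ E] (Φ : ZMod N → E)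
    (a k : ZMod N) : 𝓕 (fun j ↦ Φ (j + a)) k = stdAddChar (a * k) • 𝓕 Φ k := by
  rw [dft_apply, dft_apply, smul_sum,
    ← Equiv.sum_comp (Equiv.addRight a) fun j ↦ stdAddChar (a * k) • stdAddChar (-(j * k)) • Φ j]
  refine sum_congr rfl fun j _ ↦ ?_
  rw [Equiv.coe_addRight, smul_smul, ← AddChar.map_add_eq_mul]
  congr 2
  ring

theorem conj_dft (Φ : ZMod N → ℂ) (k : ZMod N) :
    conj (𝓕 Φ k) = 𝓕 (fun j ↦ conj (Φ (-j))) k := by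
  rw [dft_apply, dft_apply, map_sum, ← Equiv.sum_comp (Equiv.neg _)]
  refine sum_congr rfl fun j _ ↦ ?_
  simp [← AddChar.map_neg_eq_conj]

theorem dft_neg_eq_conj {Φ : ZMod N → ℂ} (hΦ : ∀ j, conj (Φ j) = Φ j) (k : ZMod N) :
    𝓕 Φ (-k) = conj (𝓕 Φ k) := by
  simp only [conj_dft, hΦ, dft_comp_neg]

theorem sum_dft_mul (Φ Ψ : ZMod N → ℂ) : ∑ k, 𝓕 Φ k * Ψ k = ∑ j, Φ j * 𝓕 Ψ j := by
  simp only [dft_apply, smul_eq_mul, sum_mul, mul_sum]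
  rw [sum_comm]
  exact sum_congr rfl fun j _ ↦ sum_congr rfl fun k _ ↦ by ring_nf

theorem sum_norm_sq_dft (Φ : ZMod N → ℂ) : ∑ k, ‖𝓕 Φ k‖ ^ 2 = N * ∑ j, ‖Φ j‖ ^ 2 := by
  apply Complex.ofReal_injective
  push_cast
  simp only [← Complex.mul_conj', conj_dft, sum_dft_mul, dft_dft, mul_sum]
  refine sum_congr rfl fun j _ ↦ ?_
  simp only [neg_neg, smul_eq_mul]
  ring

theorem dft_centralDiff (Φ : ZMod N → ℂ) (k : ZMod N) :
    𝓕 (fun j ↦ Φ (j + 1) - Φ (j - 1)) k = (stdAddChar k - stdAddChar (-k)) * 𝓕 Φ k := by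
  have h : (fun j ↦ Φ (j + 1) - Φ (j - 1)) = (fun j ↦ Φ (j + 1)) - (fun j ↦ Φ (j + -1)) := by
    ext j; simp [sub_eq_add_neg]
  rw [h, map_sub, Pi.sub_apply, dft_comp_add_right, dft_comp_add_right, smul_eq_mul,
    smul_eq_mul, one_mul, neg_one_mul, sub_mul]

theorem norm_sq_stdAddChar_sub_neg (k : ℕ) :
    ‖stdAddChar (k : ZMod N) - stdAddChar (-k : ZMod N)‖ ^ 2 =
      4 * Real.sin (2 * π * k / N) ^ 2 := by
  set θ : ℝ := 2 * π * k / N with hθ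
  have h₁ : stdAddChar (k : ZMod N) = Complex.exp (θ * Complex.I) := by
    rw [← Int.cast_natCast, stdAddChar_coe, hθ]; push_cast; ring_nf
  have h₂ : stdAddChar (-k : ZMod N) = Complex.exp (-θ * Complex.I) := by
    rw [← Int.cast_natCast, ← Int.cast_neg, stdAddChar_coe, hθ]; push_cast; ring_nf
  have hdiff : stdAddChar (k : ZMod N) - stdAddChar (-k : ZMod N) =
      2 * (Real.sin θ : ℂ) * Complex.I := by
    rw [h₁, h₂, Complex.exp_mul_I, Complex.exp_mul_I, Complex.cos_neg, Complex.sin_neg,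
      ← Complex.ofReal_sin]
    ring
  rw [hdiff, norm_mul, norm_mul, Complex.norm_I, Complex.norm_real, Complex.norm_two,
    Real.norm_eq_abs, mul_one, mul_pow, sq_abs]
  norm_num

end ZMod

theorem eight_mul_ite_localMin {p q r : ℤ} (hr : |r - q| = 1) (hp : |q - p| = 1) :
    8 * (if p > q ∧ r > q then 1 else 0) = 4 + 2 * ((r - q) - (q - p)) - (r - p) ^ 2 := by
  obtain ⟨a, rfl, ha⟩ : ∃ a, r = q + a ∧ (a = 1 ∨ a = -1) :=
    ⟨r - q, by ring, (abs_eq zero_le_one).1 hr⟩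
  obtain ⟨b, rfl, hb⟩ : ∃ b, p = q - b ∧ (b = 1 ∨ b = -1) :=
    ⟨q - p, by ring, (abs_eq zero_le_one).1 hp⟩
  rcases ha with rfl | rfl <;> rcases hb with rfl | rfl <;> norm_num

theorem eight_mul_minimaCount {t : ℕ} [NeZero t] {z : ZMod (2 * t) → ℤ}
    (hstep : ∀ k, |z (k + 1) - z k| = 1) :
    8 * (minimaCount t z : ℤ) = 8 * t - ∑ x, (z (x + 1) - z (x - 1)) ^ 2 := by
  have hcard : (minimaCount t z : ℤ) = ∑ x, if z (x - 1) > z x ∧ z (x + 1) > z x then 1 else 0 := by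
    rw [minimaCount, card_filter, Nat.cast_sum, ← sum_range_natCast_zmod]
    push_cast
    rfl
  have hpoint (x : ZMod (2 * t)) := eight_mul_ite_localMin (hstep x) (by simpa using hstep (x - 1))
  have hshift₁ : ∑ x, z (x + 1) = ∑ x, z x := Equiv.sum_comp (Equiv.addRight 1) z
  have hshift₂ : ∑ x, z (x - 1) = ∑ x, z x := Equiv.sum_comp (Equiv.subRight 1) z
  rw [hcard, mul_sum, sum_congr rfl fun x _ ↦ hpoint x]
  simp only [sum_sub_distrib, sum_add_distrib, ← mul_sum, hshift₁, hshift₂, sum_const, card_univ,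
    ZMod.card]
  ring

theorem sum_range_two_mul_eq_two_nsmul_sum_odd {M : Type*} [AddCommMonoid M] {t : ℕ} {h : ℕ → M}
    (heven : ∀ k, Even k → h k = 0) (ht : h t = 0) (hrefl : ∀ k ≤ t, h (2 * t - k) = h k) :
    ∑ k ∈ range (2 * t), h k = 2 • ∑ k ∈ range t with Odd k, h k := by
  have hupper : ∑ k ∈ range t, h (t + k) = ∑ k ∈ range t, h k := by
    rw [← sum_range_reflect]
    have := sum_range_succ' h t
    rw [sum_range_succ, ht, heven 0 ⟨0, rfl⟩, add_zero, add_zero] at this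
    rw [this]
    refine sum_congr rfl fun k hk ↦ ?_
    have hk := mem_range.1 hk
    rw [← hrefl (k + 1) (by omega)]
    congr 1
    omega
  rw [two_mul, sum_range_add, hupper, two_nsmul, sum_filter_of_ne]
  intro k _ hk
  exact Nat.not_even_iff_odd.1 (mt (heven k) hk)

section Signal

variable {t : ℕ} [NeZero t]

theorem dft_eq_zmod_dft (Φ : ZMod (2 * t) → ℂ) (k : ℕ) : dft t Φ k = 𝓕 Φ k := by
  rw [dft, ZMod.dft_apply, ← sum_range_natCast_zmod]
  refine sum_congr rfl fun j _ ↦ ?_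
  have hjk : -((j : ZMod (2 * t)) * k) = ((-(j * k : ℤ) : ℤ) : ZMod (2 * t)) := by push_cast; ring
  have ht : (t : ℂ) ≠ 0 := Nat.cast_ne_zero.2 (NeZero.ne t)
  rw [hjk, ZMod.stdAddChar_coe, smul_eq_mul, mul_comm]
  congr 2
  push_cast
  field_simp

theorem dft_eq_zero_of_antiperiodic {Φ : ZMod (2 * t) → ℂ} (hΦ : ∀ j, Φ (j + t) = -Φ j) {k : ℕ}
    (hk : Even k) : 𝓕 Φ k = 0 := by
  have h := ZMod.dft_comp_add_right Φ t k
  obtain ⟨m, rfl⟩ := hk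
  have h2t : (t : ZMod (2 * t)) * ((m + m : ℕ) : ZMod (2 * t)) = 0 := by
    rw [← Nat.cast_mul, show t * (m + m) = 2 * t * m by ring, Nat.cast_mul, ZMod.natCast_self,
      zero_mul]
  simp only [hΦ, h2t, AddChar.map_zero_eq_one, one_smul] at h
  rw [show (fun j ↦ -Φ j) = -Φ from rfl, map_neg, Pi.neg_apply] at h
  exact CharZero.neg_eq_self_iff.1 h

theorem norm_sq_dft_centralDiff (Φ : ZMod (2 * t) → ℂ) (k : ℕ) :
    ‖𝓕 (fun x ↦ Φ (x + 1) - Φ (x - 1)) k‖ ^ 2 = 4 * Real.sin (π * k / t) ^ 2 * ‖dft t Φ k‖ ^ 2 := by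
  rw [ZMod.dft_centralDiff, norm_mul, mul_pow, ZMod.norm_sq_stdAddChar_sub_neg, dft_eq_zmod_dft]
  congr 4
  push_cast
  field_simp

theorem mul_sum_sq_centralDiff_eq_sum_odd_dft {z : ZMod (2 * t) → ℤ} {c : ℤ}
    (hant : ∀ k, z (k + t) = c - z k) :
    t * ∑ x, ((z (x + 1) : ℝ) - z (x - 1)) ^ 2 =
      4 * ∑ k ∈ range t with Odd k,
        ‖dft t (fun j ↦ (z j : ℂ)) k‖ ^ 2 * Real.sin (π * k / t) ^ 2 := by
  set Z : ZMod (2 * t) → ℂ := fun j ↦ z j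
  set G : ZMod (2 * t) → ℂ := fun x ↦ Z (x + 1) - Z (x - 1)
  set h : ℕ → ℝ := fun k ↦ ‖𝓕 G k‖ ^ 2
  have htR : (t : ℝ) ≠ 0 := Nat.cast_ne_zero.2 (NeZero.ne t)
  have hmult (k : ℕ) : h k = 4 * Real.sin (π * k / t) ^ 2 * ‖dft t Z k‖ ^ 2 :=
    norm_sq_dft_centralDiff Z k
  have hanti (x : ZMod (2 * t)) : G (x + t) = -G x := by
    have e₁ : x + t + 1 = x + 1 + t := by ring
    have e₂ : x + t - 1 = x - 1 + t := by ring
    simp only [G, Z, e₁, e₂, hant]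
    push_cast
    ring
  have hreal (x : ZMod (2 * t)) : conj (G x) = G x := by simp [G, Z]
  have hpair : ∑ k : ZMod (2 * t), ‖𝓕 G k‖ ^ 2 = 2 * ∑ k ∈ range t with Odd k, h k := by
    rw [← sum_range_natCast_zmod]
    refine (sum_range_two_mul_eq_two_nsmul_sum_odd (fun k hk ↦ ?_) ?_ fun k hk ↦ ?_).trans
      (two_nsmul _) |>.trans (two_mul _).symm
    · simp [dft_eq_zero_of_antiperiodic hanti hk]
    -- `t` may be odd: this frequency is killed by the factor `sin π`, not by parity.
    · exact (hmult t).trans (by rw [mul_div_cancel_right₀ _ htR, Real.sin_pi]; ring)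
    · rw [Nat.cast_sub (by omega), ZMod.natCast_self, zero_sub, ZMod.dft_neg_eq_conj hreal,
        Complex.norm_conj]
  have hG (x : ZMod (2 * t)) : ‖G x‖ ^ 2 = ((z (x + 1) : ℝ) - z (x - 1)) ^ 2 := by
    rw [show G x = ((z (x + 1) - z (x - 1) : ℝ) : ℂ) by simp [G, Z], Complex.norm_real,
      Real.norm_eq_abs, sq_abs]
  have hodd : ∑ k ∈ range t with Odd k, h k =
      4 * ∑ k ∈ range t with Odd k, ‖dft t Z k‖ ^ 2 * Real.sin (π * k / t) ^ 2 := by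
    rw [mul_sum]
    exact sum_congr rfl fun k _ ↦ by rw [hmult]; ring
  have hparseval := ZMod.sum_norm_sq_dft G
  rw [hpair, hodd] at hparseval
  simp only [hG] at hparseval
  push_cast at hparseval
  linear_combination -hparseval / 2

theorem minimaCount_eq_sub_sum_odd_dft {z : ZMod (2 * t) → ℤ}
    (hstep : ∀ k, |z (k + 1) - z k| = 1) (hant : ∀ k, z (k + t) = t - z k) :
    (minimaCount t z : ℝ) = t - 1 / (2 * t) * ∑ k ∈ range t with Odd k,
      ‖dft t (fun j ↦ (z j : ℂ)) k‖ ^ 2 * Real.sin (π * k / t) ^ 2 := by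
  have hcount : 8 * (minimaCount t z : ℝ) = 8 * t - ∑ x, ((z (x + 1) : ℝ) - z (x - 1)) ^ 2 := by
    exact_mod_cast eight_mul_minimaCount hstep
  have hfourier := mul_sum_sq_centralDiff_eq_sum_odd_dft hant
  have htR : (t : ℝ) ≠ 0 := Nat.cast_ne_zero.2 (NeZero.ne t)
  field_simp
  linear_combination (t / 4 : ℝ) * hcount - hfourier / 4

end Signal

theorem minima_sum_two_cycles (t : ℕ) (ht : 2 ≤ t) (z' z'' : ZMod (2*t) → ℤ)
    (hstep' : ∀ k : ZMod (2*t), |z' (k + 1) - z' k| = 1)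
    (hstep'' : ∀ k : ZMod (2*t), |z'' (k + 1) - z'' k| = 1)
    (hant' : ∀ k : ZMod (2*t), z' (k + (t : ZMod (2*t))) = (t : ℤ) - z' k)
    (hant'' : ∀ k : ZMod (2*t), z'' (k + (t : ZMod (2*t))) = (t : ℤ) - z'' k)
    (e m : ZMod (2*t) → ℂ)
    (he : ∀ j, e j = (z'' j : ℂ) - (z' j : ℂ))
    (hm : ∀ j, m j = (z'' j : ℂ) + (z' j : ℂ)) :
    (minimaCount t z' : ℝ) + (minimaCount t z'' : ℝ) =
      2*(t : ℝ) - (1/(4*(t:ℝ))) * ∑ k ∈ (Finset.range t).filter (fun k => Odd k),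
        (‖dft t e k‖^2 + ‖dft t m k‖^2) *
          (Real.sin (Real.pi * k / t))^2 := by
  have : NeZero t := ⟨by omega⟩
  set Z' : ZMod (2 * t) → ℂ := fun j ↦ z' j
  set Z'' : ZMod (2 * t) → ℂ := fun j ↦ z'' j
  have hparallelogram (k : ℕ) :
      ‖dft t e k‖ ^ 2 + ‖dft t m k‖ ^ 2 = 2 * (‖dft t Z' k‖ ^ 2 + ‖dft t Z'' k‖ ^ 2) := by
    simp only [dft_eq_zmod_dft, show e = Z'' - Z' from funext he, show m = Z'' + Z' from funext hm,
      map_sub, map_add, Pi.sub_apply, Pi.add_apply]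
    linear_combination parallelogram_law_with_norm ℝ (𝓕 Z'' k) (𝓕 Z' k)
  rw [minimaCount_eq_sub_sum_odd_dft hstep' hant', minimaCount_eq_sub_sum_odd_dft hstep'' hant'']
  simp only [hparallelogram, add_mul, mul_assoc, ← mul_sum, sum_add_distrib]
  have htR : (t : ℝ) ≠ 0 := Nat.cast_ne_zero.2 (NeZero.ne t)
  field_simp
  ring
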